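/- In the ai-semiring B₂¹, the word xyxztz is an isoterm: if u is any word with u ⪯ xyxztz in B₂¹ (i.e., B₂¹ satisfies u + xyxztz ≈ xyxztz), then u = xyxztz. -/

import Mathlib

/-!
The value `a` of `B₂¹` is minimal in its order, so whenever `xyxztz` evaluates to `a`
under an assignment, `u ⪯ xyxztz` forces `u` to evaluate to `a` as well. Sending one variable to
`0` and the rest to `1` shows that `u` only uses `x, y, z, t`. Sending `y ↦ a` and all else to `1`
shows that `y` occurs once in `u`; then `x ↦ a, y ↦ b` makes the `{x, y}`-subword of `u` equal to
`xyx`, because `aⁱ b aʲ = a` only for `i = j = 1`. Symmetrically the `{z, t}`-subword is `ztz`,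
and two assignments under which `xyxztz` evaluates to `ab` single out `xyxztz` among the
shuffles of `xyx` and `ztz`.
-/

/-- The six-element Brandt monoid `B₂¹`: `z = 0`, `e = 1`, `a = E₁₂`,
`b = E₂₁`, `ab = E₁₁`, `ba = E₂₂`. -/
inductive B : Type
  | z | e | a | b | ab | ba
deriving DecidableEq

/-- Multiplication of `B₂¹` (multiplication of `2×2` matrix units). -/
def bmul : B → B → B
  | B.z, _ => B.z
  | _, B.z => B.z
  | B.e, x => x
  | x, B.e => x
  | B.a, B.b => B.ab
  | B.b, B.a => B.ba
  | B.a, B.ba => B.a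
  | B.ab, B.a => B.a
  | B.b, B.ab => B.b
  | B.ba, B.b => B.b
  | B.ab, B.ab => B.ab
  | B.ba, B.ba => B.ba
  | _, _ => B.z

/-- Addition of `B₂¹`, determined by the semilattice order with `1 ≤ ab`,
`1 ≤ ba` and everything `≤ 0`. -/
def badd : B → B → B := fun x y =>
  if x = y then x
  else if (x = B.e ∧ y = B.ab) ∨ (x = B.ab ∧ y = B.e) then B.ab
  else if (x = B.e ∧ y = B.ba) ∨ (x = B.ba ∧ y = B.e) then B.ba
  else B.z

/-- Evaluate a (nonempty) word in a magma under an assignment. -/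
def evalWith {S V : Type*} (mul : S → S → S) (z : S) (φ : V → S) : List V → S
  | [] => z
  | h :: t => t.foldl (fun s v => mul s (φ v)) (φ h)

/-- The word `xyxztz`, with `x, y, z, t` encoded as the variables `0, 1, 2, 3`. -/
def wordXYXZTZ : List ℕ := [0, 1, 0, 2, 3, 2]

instance : MonoidWithZero B where
  mul := bmul
  one := B.e
  zero := B.z
  mul_assoc x y w := by cases x <;> cases y <;> cases w <;> rfl
  one_mul x := by cases x <;> rfl
  mul_one x := by cases x <;> rfl
  zero_mul x := by cases x <;> rfl
  mul_zero x := by cases x <;> rfl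

theorem evalWith_mul_eq_prod {M V : Type*} [Monoid M] (φ : V → M) (l : List V) :
    evalWith (· * ·) 1 φ l = (l.map φ).prod := by
  have foldl_eq : ∀ (t : List V) (s : M), t.foldl (fun s v => s * φ v) s = s * (t.map φ).prod := by
    intro t
    induction t with
    | nil => exact fun s => (mul_one s).symm
    | cons v t ih => intro s; rw [List.foldl_cons, ih, List.map_cons, List.prod_cons, mul_assoc]
  cases l with
  | nil => rfl
  | cons v t => exact (foldl_eq t (φ v)).trans (List.prod_cons).symm

theorem evalWith_bmul_eq_prod {V : Type*} (φ : V → B) (l : List V) :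
    evalWith bmul B.e φ l = (l.map φ).prod :=
  evalWith_mul_eq_prod φ l

theorem badd_a_eq_a_iff {v : B} : badd v B.a = B.a ↔ v = B.a := by
  cases v <;> decide

theorem a_pow_add_two (n : ℕ) : B.a ^ (n + 2) = 0 := by
  rw [pow_add, sq]
  exact mul_zero _

theorem a_pow_eq_a_iff {n : ℕ} : B.a ^ n = B.a ↔ n = 1 := by
  rcases n with _ | _ | n <;> simp [a_pow_add_two]

theorem a_pow_mul_b_mul_a_pow_eq_a_iff {i j : ℕ} :
    B.a ^ i * (B.b * B.a ^ j) = B.a ↔ i = 1 ∧ j = 1 := by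
  rcases i with _ | _ | i <;> rcases j with _ | _ | j <;> simp [a_pow_add_two] <;> decide

theorem List.prod_map_filter_of_eq_one {M α : Type*} [Monoid M] (p : α → Bool) (f : α → M)
    {l : List α} (h : ∀ v ∈ l, p v = false → f v = 1) :
    ((l.filter p).map f).prod = (l.map f).prod := by
  induction l with
  | nil => rfl
  | cons v l ih =>
    have ih' := ih fun w hw => h w (List.mem_cons_of_mem v hw)
    cases hv : p v
    · simp [hv, ih', h v List.mem_cons_self hv]
    · simp [hv, ih']

section

variable {V : Type*} [DecidableEq V]

def pairAB (x y : V) : V → B := fun v => if v = x then B.a else if v = y then B.b else 1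

theorem eq_xyx_of_prod_pairAB {x y : V} (hxy : x ≠ y) {l : List V} (hl : ∀ v ∈ l, v = x ∨ v = y)
    (hy : l.count y = 1) (h : (l.map (pairAB x y)).prod = B.a) : l = [x, y, x] := by
  obtain ⟨s, t, rfl⟩ := List.append_of_mem (List.count_pos_iff.1 (hy ▸ Nat.one_pos))
  rw [List.count_append, List.count_cons_self] at hy
  have eq_x : ∀ v ∈ s ++ t, v = x := by
    intro v hv
    refine (hl v (List.mem_append.2 ((List.mem_append.1 hv).imp id (List.mem_cons_of_mem y)))
      ).resolve_right ?_
    rintro rfl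
    have := List.count_pos_iff.2 hv
    rw [List.count_append] at this
    omega
  obtain ⟨i, rfl⟩ : ∃ i, s = List.replicate i x :=
    ⟨_, List.eq_replicate_iff.2 ⟨rfl, fun v hv => eq_x v (List.mem_append_left t hv)⟩⟩
  obtain ⟨j, rfl⟩ : ∃ j, t = List.replicate j x :=
    ⟨_, List.eq_replicate_iff.2 ⟨rfl, fun v hv => eq_x v (List.mem_append_right _ hv)⟩⟩
  simp only [List.map_append, List.map_cons, List.map_replicate, List.prod_append, List.prod_cons,
    List.prod_replicate, pairAB, if_pos, hxy.symm, if_false] at h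
  obtain ⟨rfl, rfl⟩ := a_pow_mul_b_mul_a_pow_eq_a_iff.1 h
  rfl

theorem filter_eq_xyx_of_prod_eq_a {x y : V} (hxy : x ≠ y) {l : List V}
    (hy : (l.map (Pi.mulSingle y B.a)).prod = B.a) (hpair : (l.map (pairAB x y)).prod = B.a) :
    l.filter (fun v => v = x ∨ v = y) = [x, y, x] := by
  have hcount : l.count y = 1 := by
    rw [List.prod_map_eq_pow_single y _ fun v hv _ => Pi.mulSingle_eq_of_ne hv _,
      Pi.mulSingle_eq_same] at hy
    exact a_pow_eq_a_iff.1 hy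
  refine eq_xyx_of_prod_pairAB hxy (fun v hv => by simpa using (List.mem_filter.1 hv).2) ?_ ?_
  · rwa [List.count_filter (by simp)]
  · rwa [List.prod_map_filter_of_eq_one]
    intro v _ hv
    simp only [decide_eq_false_iff_not, not_or] at hv
    simp [pairAB, hv.1, hv.2]

end

theorem List.forall_mem_of_prod_map_ite_ne_zero {M₀ α : Type*} [MonoidWithZero M₀]
    (p : α → Prop) [DecidablePred p] {l : List α}
    (h : (l.map fun v => if p v then (1 : M₀) else 0).prod ≠ 0) : ∀ v ∈ l, p v := by
  intro v hv
  by_contra hpv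
  exact h (List.prod_eq_zero (List.mem_map.2 ⟨v, hv, if_neg hpv⟩))

/- Under `y ↦ a, t ↦ b` the word `xyxztz` evaluates to `ab`, which forces `y` before `t`. Under
`x, t ↦ a` and `y, z ↦ b` it evaluates to `ab` as well, so the images of the letters of `u` must
read `ababab`; among the shuffles of `xyx` and `ztz` with `y` before `t` only `xyxztz` does. -/
theorem eq_wordXYXZTZ_of_shuffle {u : List ℕ} (hlen : u.length = 6) (hlt : ∀ v ∈ u, v < 4)
    (h01 : u.filter (fun v => v = 0 ∨ v = 1) = [0, 1, 0])
    (h23 : u.filter (fun v => v = 2 ∨ v = 3) = [2, 3, 2])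
    (hle : ∀ φ : ℕ → B, badd (u.map φ).prod (wordXYXZTZ.map φ).prod = (wordXYXZTZ.map φ).prod) :
    u = wordXYXZTZ := by
  match u, hlen with
  | [p, q, r, s, t, v], _ =>
    have key : ∀ p q r s t v : Fin 4, let u := [p.1, q.1, r.1, s.1, t.1, v.1]
        u.filter (fun v => v = 0 ∨ v = 1) = [0, 1, 0] →
        u.filter (fun v => v = 2 ∨ v = 3) = [2, 3, 2] →
        badd (u.map (pairAB 1 3)).prod B.ab = B.ab →
        badd (u.map fun v => if v = 0 ∨ v = 3 then B.a else B.b).prod B.ab = B.ab →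
        u = wordXYXZTZ := by
      decide
    exact key ⟨p, hlt p (by simp)⟩ ⟨q, hlt q (by simp)⟩ ⟨r, hlt r (by simp)⟩
      ⟨s, hlt s (by simp)⟩ ⟨t, hlt t (by simp)⟩ ⟨v, hlt v (by simp)⟩ h01 h23 (hle _) (hle _)

/-- `xyxztz` is an isoterm for `B₂¹`: any word `u` with `u ⪯ xyxztz` in `B₂¹`
(i.e. `B₂¹` satisfies `u + xyxztz ≈ xyxztz`) equals `xyxztz`. -/
theorem stmt16 :
    ∀ u : List ℕ, u ≠ [] →
      (∀ φ : ℕ → B,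
        badd (evalWith bmul B.e φ u) (evalWith bmul B.e φ wordXYXZTZ) =
          evalWith bmul B.e φ wordXYXZTZ) →
      u = wordXYXZTZ := by
  intro u _ h
  simp only [evalWith_bmul_eq_prod] at h
  have prod_eq_a {φ : ℕ → B} (hw : (wordXYXZTZ.map φ).prod = B.a) : (u.map φ).prod = B.a :=
    badd_a_eq_a_iff.1 (hw ▸ h φ)
  have hlt : ∀ v ∈ u, v < 4 := by
    refine List.forall_mem_of_prod_map_ite_ne_zero (M₀ := B) (· < 4) fun h0 => ?_
    have h1 := h fun v => if v < 4 then 1 else 0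
    rw [h0] at h1
    revert h1
    decide
  have h01 := filter_eq_xyx_of_prod_eq_a (by decide)
    (prod_eq_a (φ := Pi.mulSingle 1 B.a) (by decide)) (prod_eq_a (φ := pairAB 0 1) (by decide))
  have h23 := filter_eq_xyx_of_prod_eq_a (by decide)
    (prod_eq_a (φ := Pi.mulSingle 3 B.a) (by decide)) (prod_eq_a (φ := pairAB 2 3) (by decide))
  refine eq_wordXYXZTZ_of_shuffle ?_ hlt h01 h23 h
  have h23' : u.filter (fun v => !decide (v = 0 ∨ v = 1)) = [2, 3, 2] := by
    rw [← h23]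
    refine List.filter_congr fun v hv => ?_
    have := hlt v hv
    interval_cases v <;> rfl
  rw [List.length_eq_length_filter_add (fun v => decide (v = 0 ∨ v = 1)), h01, h23']
  rfl
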